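/- arXiv:1305.6097 — 3 statements merged into one kernel-verified Lean document; each statement's English description precedes it below -/
import Mathlib

section
/- Let Φ be a finite root system with simple roots Δ and fundamental weights ω₁,...,ω_n, and let A be the span of a subset I of simple roots. Write the orthogonal projection δ_A of δ onto A^⊥ in the weight basis: δ_A = Σ_s b_s ω_s. Then b_s = 0 for s ∈ I and b_s ≥ 1 for s ∉ I. -/
open Finset Submodule
open scoped Classical

local notation "⟪" x ", " y "⟫" => @inner ℝ _ _ x y

/-!
A projection onto `Aᗮ` changes `δ` by an element `δ - δ_A` of `span I`, so the coefficient
`b α = 2 ⟪α, δ_A⟫ / ⟪α, α⟫` vanishes for `α ∈ I`. For `α ∉ I`, two classical facts about simple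
roots finish the argument: the reflection `s_α` permutes the positive roots that are not multiples
of `α`, whence `⟪α, α⟫ ≤ 2 ⟪δ, α⟫`; and distinct simple roots form an obtuse basis, so
`δ - δ_A`, which pairs nonnegatively with `I`, has nonnegative coefficients in `I` and therefore
pairs nonpositively with `α`. Hence `b α ⟪α, α⟫ = 2 ⟪α, δ⟫ - 2 ⟪α, δ - δ_A⟫ ≥ ⟪α, α⟫`.
-/

section Coefficients

variable {R M : Type*} [Ring R] [AddCommGroup M] [Module R M]

theorem sum_ite_eq_smul {s : Finset M} {α : M} (hα : α ∈ s) (t : R) :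
    ∑ μ ∈ s, (if μ = α then t else 0) • μ = t • α := by
  simp [ite_smul, hα]

theorem sum_sub_ite_smul {s : Finset M} {α : M} (hα : α ∈ s) (c : M → R) (t : R) :
    ∑ μ ∈ s, (c μ - if μ = α then t else 0) • μ = ∑ μ ∈ s, c μ • μ - t • α := by
  simp only [sub_smul, sum_sub_distrib, sum_ite_eq_smul hα]

end Coefficients

section SimpleSystem

variable {V : Type*} [NormedAddCommGroup V] [InnerProductSpace ℝ V]

theorem two_mul_inner_sum_smul {s : Finset V} {ω : V → V}
    (hω : ∀ α ∈ s, ∀ β ∈ s, 2 * ⟪α, ω β⟫ = if α = β then ⟪α, α⟫ else 0)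
    (b : V → ℝ) {α : V} (hα : α ∈ s) :
    2 * ⟪α, ∑ β ∈ s, b β • ω β⟫ = b α * ⟪α, α⟫ := by
  have hterm : ∀ β ∈ s, 2 * ⟪α, b β • ω β⟫ = if α = β then b β * ⟪α, α⟫ else 0 := by
    intro β hβ
    rw [real_inner_smul_right, mul_left_comm, hω α hα β hβ, mul_ite, mul_zero]
  rw [inner_sum, mul_sum, sum_congr rfl hterm, sum_ite_eq s α, if_pos hα]

/-- Split `∑ c μ • μ = u - w` into its positive and negative parts; then
`⟪w, w⟫ = ⟪u, w⟫ - ⟪u - w, w⟫ ≤ 0`, since the supports of `u` and `w` are disjoint. -/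
theorem coeff_nonneg_of_inner_nonneg {s : Finset V} (hs : LinearIndepOn ℝ id (s : Set V))
    (hobtuse : ∀ μ ∈ s, ∀ ν ∈ s, μ ≠ ν → ⟪μ, ν⟫ ≤ 0) {c : V → ℝ}
    (hc : ∀ ν ∈ s, 0 ≤ ⟪ν, ∑ μ ∈ s, c μ • μ⟫) {μ : V} (hμ : μ ∈ s) : 0 ≤ c μ := by
  set u := ∑ μ ∈ s, (c μ)⁺ • μ
  set w := ∑ μ ∈ s, (c μ)⁻ • μ
  have huw : ∑ μ ∈ s, c μ • μ = u - w := by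
    simp only [u, w, ← sum_sub_distrib, ← sub_smul, posPart_sub_negPart]
  have hu : ⟪u, w⟫ ≤ 0 := by
    simp only [u, w, sum_inner, inner_sum, real_inner_smul_left, real_inner_smul_right]
    refine sum_nonpos fun μ hμ => sum_nonpos fun ν hν => ?_
    rcases eq_or_ne ν μ with rfl | hne
    · rcases le_total 0 (c ν) with h | h
      · simp [negPart_eq_zero.2 h]
      · simp [posPart_eq_zero.2 h]
    · exact mul_nonpos_of_nonneg_of_nonpos (negPart_nonneg _)
        (mul_nonpos_of_nonneg_of_nonpos (posPart_nonneg _) (hobtuse ν hν μ hμ hne))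
  have hw : 0 ≤ ⟪u - w, w⟫ := by
    simp only [← huw, w, inner_sum, real_inner_smul_right]
    exact sum_nonneg fun ν hν =>
      mul_nonneg (negPart_nonneg _) (by rw [real_inner_comm]; exact hc ν hν)
  have hw0 : w = 0 := by
    rw [inner_sub_left] at hw
    exact inner_self_eq_zero.1 (le_antisymm (by linarith [real_inner_comm u w])
      real_inner_self_nonneg)
  exact negPart_eq_zero.1 (linearIndepOn_finset_iff.1 hs (fun μ => (c μ)⁻) hw0 μ hμ)

theorem inner_nonpos_of_mem_span_of_inner_nonneg {s t : Finset V} (hts : t ⊆ s)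
    (ht : LinearIndepOn ℝ id (t : Set V)) (hobtuse : ∀ μ ∈ s, ∀ ν ∈ s, μ ≠ ν → ⟪μ, ν⟫ ≤ 0)
    {v : V} (hv : v ∈ span ℝ (t : Set V)) (hvt : ∀ ν ∈ t, 0 ≤ ⟪ν, v⟫)
    {α : V} (hα : α ∈ s) (hαt : α ∉ t) : ⟪α, v⟫ ≤ 0 := by
  obtain ⟨c, -, rfl⟩ := mem_span_finset.1 hv
  have hc : ∀ ν ∈ t, 0 ≤ c ν := fun ν hν =>
    coeff_nonneg_of_inner_nonneg ht (fun μ hμ ν hν => hobtuse μ (hts hμ) ν (hts hν)) hvt hν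
  rw [inner_sum]
  refine sum_nonpos fun ν hν => ?_
  rw [real_inner_smul_right]
  exact mul_nonpos_of_nonneg_of_nonpos (hc ν hν)
    (hobtuse α hα ν (hts hν) (ne_of_mem_of_not_mem hν hαt).symm)

noncomputable def rootReflection (α β : V) : V := β - (2 * ⟪β, α⟫ / ⟪α, α⟫) • α

theorem inner_rootReflection_left {α : V} (hα : α ≠ 0) (β : V) :
    ⟪rootReflection α β, α⟫ = -⟪β, α⟫ := by
  rw [rootReflection, inner_sub_left, real_inner_smul_left,
    div_mul_cancel₀ _ (inner_self_ne_zero.2 hα)]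
  ring

theorem rootReflection_rootReflection {α : V} (hα : α ≠ 0) (β : V) :
    rootReflection α (rootReflection α β) = β := by
  conv_lhs => rw [rootReflection, inner_rootReflection_left hα, rootReflection]
  rw [mul_neg, neg_div, neg_smul, sub_neg_eq_add, sub_add_cancel]

theorem rootReflection_mem_span_singleton_iff (α β : V) :
    rootReflection α β ∈ ℝ ∙ α ↔ β ∈ ℝ ∙ α :=
  sub_mem_iff_left _ (smul_mem _ _ (mem_span_singleton_self α))

structure IsSimpleSystem (Φ pos Δ : Finset V) : Prop where
  zero_notMem : (0 : V) ∉ Φ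
  rootReflection_mem : ∀ α ∈ Φ, ∀ β ∈ Φ, rootReflection α β ∈ Φ
  pos_subset : pos ⊆ Φ
  mem_or_neg_mem : ∀ α ∈ Φ, α ∈ pos ∨ -α ∈ pos
  simple_subset : Δ ⊆ pos
  linearIndepOn : LinearIndepOn ℝ id (Δ : Set V)
  exists_nonneg_coeff : ∀ β ∈ pos, ∃ c : V → ℝ, (∀ α ∈ Δ, 0 ≤ c α) ∧ β = ∑ α ∈ Δ, c α • α

namespace IsSimpleSystem

variable {Φ pos Δ : Finset V}

theorem mem_of_mem_simple (h : IsSimpleSystem Φ pos Δ) {α : V} (hα : α ∈ Δ) : α ∈ Φ :=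
  h.pos_subset (h.simple_subset hα)

theorem ne_zero (h : IsSimpleSystem Φ pos Δ) {α : V} (hα : α ∈ Δ) : α ≠ 0 :=
  fun h0 => h.zero_notMem (h0 ▸ h.mem_of_mem_simple hα)

theorem coeff_eq (h : IsSimpleSystem Φ pos Δ) {f g : V → ℝ}
    (hfg : ∑ μ ∈ Δ, f μ • μ = ∑ μ ∈ Δ, g μ • μ) {μ : V} (hμ : μ ∈ Δ) : f μ = g μ :=
  linearIndepOn_finset_iffₛ.1 h.linearIndepOn f g hfg μ hμ

theorem coeff_nonneg_of_mem_pos (h : IsSimpleSystem Φ pos Δ) {β : V} (hβ : β ∈ pos)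
    {c : V → ℝ} (hc : β = ∑ μ ∈ Δ, c μ • μ) {μ : V} (hμ : μ ∈ Δ) : 0 ≤ c μ := by
  obtain ⟨d, hd, hβd⟩ := h.exists_nonneg_coeff β hβ
  exact h.coeff_eq (hβd.symm.trans hc) hμ ▸ hd μ hμ

theorem mem_pos_of_coeff_pos (h : IsSimpleSystem Φ pos Δ) {β : V} (hβ : β ∈ Φ)
    {c : V → ℝ} (hc : β = ∑ μ ∈ Δ, c μ • μ) {μ : V} (hμ : μ ∈ Δ) (hcμ : 0 < c μ) :
    β ∈ pos := by
  refine (h.mem_or_neg_mem β hβ).resolve_right fun hneg => ?_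
  have hc' : -β = ∑ μ ∈ Δ, (-c μ) • μ := by simp only [hc, neg_smul, sum_neg_distrib]
  linarith [h.coeff_nonneg_of_mem_pos hneg hc' hμ]

theorem inner_nonpos (h : IsSimpleSystem Φ pos Δ) {α β : V} (hα : α ∈ Δ) (hβ : β ∈ Δ)
    (hne : α ≠ β) : ⟪α, β⟫ ≤ 0 := by
  by_contra! hαβ
  set k := 2 * ⟪β, α⟫ / ⟪α, α⟫
  have hk : 0 < k := div_pos (by rw [real_inner_comm]; linarith)
    (real_inner_self_pos.2 (h.ne_zero hα))
  have hγ : rootReflection α β =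
      ∑ μ ∈ Δ, ((if μ = β then 1 else 0) - if μ = α then k else 0) • μ := by
    rw [sum_sub_ite_smul hα, sum_ite_eq_smul hβ, one_smul, rootReflection]
  have hγpos := h.mem_pos_of_coeff_pos
    (h.rootReflection_mem α (h.mem_of_mem_simple hα) β (h.mem_of_mem_simple hβ)) hγ hβ
    (by simp [hne.symm])
  have := h.coeff_nonneg_of_mem_pos hγpos hγ hα
  rw [if_neg hne, if_pos rfl] at this
  linarith

theorem rootReflection_mem_pos (h : IsSimpleSystem Φ pos Δ) {α β : V} (hα : α ∈ Δ)
    (hβ : β ∈ pos) (hβα : β ∉ ℝ ∙ α) : rootReflection α β ∈ pos := by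
  obtain ⟨c, hc, hβc⟩ := h.exists_nonneg_coeff β hβ
  obtain ⟨μ, hμ, hμα, hcμ⟩ : ∃ μ ∈ Δ, μ ≠ α ∧ 0 < c μ := by
    by_contra! hcα
    refine hβα (mem_span_singleton.2 ⟨c α, ?_⟩)
    rw [hβc, sum_eq_single_of_mem α hα fun μ hμ hμα => by
      rw [le_antisymm (hcα μ hμ hμα) (hc μ hμ), zero_smul]]
  refine h.mem_pos_of_coeff_pos
    (h.rootReflection_mem α (h.mem_of_mem_simple hα) β (h.pos_subset hβ))
    (by rw [sum_sub_ite_smul hα, ← hβc]; rfl) hμ ?_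
  rwa [if_neg hμα, sub_zero]

theorem sum_inner_filter_notMem_span_eq_zero (h : IsSimpleSystem Φ pos Δ) {α : V} (hα : α ∈ Δ) :
    ∑ β ∈ pos with β ∉ ℝ ∙ α, ⟪β, α⟫ = 0 := by
  set T := {β ∈ pos | β ∉ ℝ ∙ α}
  have hT : ∀ β ∈ T, rootReflection α β ∈ T := fun β hβ => by
    rw [mem_filter] at hβ ⊢
    exact ⟨h.rootReflection_mem_pos hα hβ.1 hβ.2,
      (rootReflection_mem_span_singleton_iff α β).not.2 hβ.2⟩
  have hinv := rootReflection_rootReflection (h.ne_zero hα)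
  have hperm : ∑ β ∈ T, ⟪rootReflection α β, α⟫ = ∑ β ∈ T, ⟪β, α⟫ :=
    sum_nbij' (rootReflection α) (rootReflection α) hT hT (fun β _ => hinv β)
      (fun β _ => hinv β) (fun _ _ => rfl)
  simp only [inner_rootReflection_left (h.ne_zero hα), sum_neg_distrib] at hperm
  linarith

theorem inner_self_le_sum_inner_filter_mem_span (h : IsSimpleSystem Φ pos Δ) {α : V}
    (hα : α ∈ Δ) : ⟪α, α⟫ ≤ ∑ β ∈ pos with β ∈ ℝ ∙ α, ⟪β, α⟫ := by
  refine single_le_sum (f := fun β => ⟪β, α⟫) (fun β hβ => ?_)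
    (mem_filter.2 ⟨h.simple_subset hα, mem_span_singleton_self α⟩)
  obtain ⟨hβ, t, rfl⟩ := And.imp_right mem_span_singleton.1 (mem_filter.1 hβ)
  have ht : 0 ≤ t := by
    simpa using h.coeff_nonneg_of_mem_pos hβ (sum_ite_eq_smul hα t).symm hα
  exact (real_inner_smul_left α α t).symm ▸ mul_nonneg ht real_inner_self_nonneg

theorem inner_self_le_two_mul_inner_halfSum (h : IsSimpleSystem Φ pos Δ) {α : V}
    (hα : α ∈ Δ) : ⟪α, α⟫ ≤ 2 * ⟪(2 : ℝ)⁻¹ • ∑ β ∈ pos, β, α⟫ := by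
  rw [real_inner_smul_left, ← mul_assoc, mul_inv_cancel₀ two_ne_zero, one_mul, sum_inner,
    ← sum_filter_add_sum_filter_not pos (· ∈ ℝ ∙ α), h.sum_inner_filter_notMem_span_eq_zero hα,
    add_zero]
  exact h.inner_self_le_sum_inner_filter_mem_span hα

end IsSimpleSystem

end SimpleSystem

theorem stmt6_general {V : Type*} [NormedAddCommGroup V] [InnerProductSpace ℝ V]
    [FiniteDimensional ℝ V]
    (Φ pos Δ : Finset V)
    (h0 : (0 : V) ∉ Φ)
    (hrefl : ∀ α ∈ Φ, ∀ β ∈ Φ, β - (2 * ⟪β, α⟫ / ⟪α, α⟫) • α ∈ Φ)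
    (hpos : pos ⊆ Φ)
    (hposneg : ∀ α ∈ Φ, (α ∈ pos ∧ -α ∉ pos) ∨ (α ∉ pos ∧ -α ∈ pos))
    (hΔpos : Δ ⊆ pos)
    (hΔindep : LinearIndependent ℝ ((↑) : (↑Δ : Set V) → V))
    (hΔcomb : ∀ β ∈ pos, ∃ c : V → ℝ, (∀ α ∈ Δ, 0 ≤ c α) ∧ β = ∑ α ∈ Δ, c α • α)
    (δ : V) (hδ : δ = (2 : ℝ)⁻¹ • ∑ α ∈ pos, α)
    (ω : V → V)
    (hω : ∀ α ∈ Δ, ∀ β ∈ Δ, 2 * ⟪α, ω β⟫ = if α = β then ⟪α, α⟫ else 0)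
    (I : Finset V) (hI : I ⊆ Δ)
    (A : Submodule ℝ V) (hA : A = span ℝ (↑I : Set V))
    (b : V → ℝ)
    (hb : ((orthogonalProjection Aᗮ δ : V)) = ∑ α ∈ Δ, b α • ω α) :
    ∀ α ∈ Δ, (α ∈ I → b α = 0) ∧ (α ∉ I → 1 ≤ b α) := by
  have hS : IsSimpleSystem Φ pos Δ := ⟨h0, hrefl, hpos,
    fun α hα => (hposneg α hα).imp And.left And.right, hΔpos, hΔindep, hΔcomb⟩
  have hδle : ∀ α ∈ Δ, ⟪α, α⟫ ≤ 2 * ⟪α, δ⟫ := fun α hα => by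
    have := hS.inner_self_le_two_mul_inner_halfSum hα
    rwa [← hδ, real_inner_comm α δ] at this
  have hPmem : ∑ α ∈ Δ, b α • ω α ∈ Aᗮ := by
    rw [← hb]; exact coe_mem _
  have hδP : δ - ∑ α ∈ Δ, b α • ω α ∈ A := by
    have h := sub_starProjection_mem_orthogonal (K := Aᗮ) δ
    rwa [orthogonal_orthogonal, starProjection_apply, hb] at h
  subst hA
  have hPI : ∀ ν ∈ I, ⟪ν, ∑ α ∈ Δ, b α • ω α⟫ = 0 := fun ν hν =>
    (mem_orthogonal _ _).1 hPmem ν (subset_span hν)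
  intro α hα
  have hbα := two_mul_inner_sum_smul hω b hα
  have hαα : 0 < ⟪α, α⟫ := real_inner_self_pos.2 (hS.ne_zero hα)
  refine ⟨fun hαI => ?_, fun hαI => ?_⟩
  · rw [hPI α hαI, mul_zero, eq_comm] at hbα
    exact (mul_eq_zero.1 hbα).resolve_right hαα.ne'
  · have hαδP := inner_nonpos_of_mem_span_of_inner_nonneg hI
      (hS.linearIndepOn.mono (coe_subset.2 hI)) (fun μ hμ ν hν => hS.inner_nonpos hμ hν) hδP
      (fun ν hν => by
        rw [inner_sub_right, hPI ν hν, sub_zero]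
        linarith [hδle ν (hI hν), real_inner_self_nonneg (x := ν)]) hα hαI
    rw [inner_sub_right] at hαδP
    nlinarith [hδle α hα]

/-- Let `Φ` be a finite root system with simple system `Δ` and fundamental weights
`ω α` (for `α ∈ Δ`, characterized by `2 (α, ω β)/(α, α) = δ_{αβ}`), and let `A` be
the span of a subset `I ⊆ Δ`.  Writing the orthogonal projection `δ_A` of the
half-sum `δ` of positive roots onto `A^⊥` in the weight basis,
`δ_A = Σ_{α ∈ Δ} b α • ω α`, one has `b α = 0` for `α ∈ I` and `b α ≥ 1` for
`α ∉ I`. -/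
theorem stmt6 {V : Type*} [NormedAddCommGroup V] [InnerProductSpace ℝ V]
    [FiniteDimensional ℝ V]
    (Φ pos Δ : Finset V)
    (hspan : Submodule.span ℝ (↑Δ : Set V) = ⊤)
    (h0 : (0 : V) ∉ Φ)
    (hneg : ∀ α ∈ Φ, -α ∈ Φ)
    (hrefl : ∀ α ∈ Φ, ∀ β ∈ Φ, β - (2 * ⟪β, α⟫ / ⟪α, α⟫) • α ∈ Φ)
    (hpos : pos ⊆ Φ)
    (hposneg : ∀ α ∈ Φ, (α ∈ pos ∧ -α ∉ pos) ∨ (α ∉ pos ∧ -α ∈ pos))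
    (hΔpos : Δ ⊆ pos)
    (hΔindep : LinearIndependent ℝ ((↑) : (↑Δ : Set V) → V))
    (hΔcomb : ∀ β ∈ pos, ∃ c : V → ℝ, (∀ α ∈ Δ, 0 ≤ c α) ∧ β = ∑ α ∈ Δ, c α • α)
    (δ : V) (hδ : δ = (2 : ℝ)⁻¹ • ∑ α ∈ pos, α)
    (ω : V → V)
    (hω : ∀ α ∈ Δ, ∀ β ∈ Δ, 2 * ⟪α, ω β⟫ = if α = β then ⟪α, α⟫ else 0)
    (I : Finset V) (hI : I ⊆ Δ)
    (A : Submodule ℝ V) (hA : A = span ℝ (↑I : Set V))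
    (b : V → ℝ)
    (hb : ((orthogonalProjection Aᗮ δ : V)) = ∑ α ∈ Δ, b α • ω α) :
    ∀ α ∈ Δ, (α ∈ I → b α = 0) ∧ (α ∉ I → 1 ≤ b α) :=
  stmt6_general Φ pos Δ h0 hrefl hpos hposneg hΔpos hΔindep hΔcomb δ hδ ω hω I hI A hA b hb
end

section
/- In the maximal building set C_Φ associated to a root system Φ (all subspaces spanned by subsets of roots), every nested set is linearly ordered by inclusion. Conversely, if a building set G associated to Φ is not maximal, then there exists a G-nested set consisting of two incomparable subspaces. -/
open Submodule

/-- `S` is a nested set for a building set `G` of subspaces: `S ⊆ G` and the sum of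
any family of `≥ 2` pairwise incomparable members of `S` does not belong to `G`. -/
def NestedSub {V : Type*} [AddCommGroup V] [Module ℝ V]
    (G : Set (Submodule ℝ V)) (S : Set (Submodule ℝ V)) : Prop :=
  S ⊆ G ∧
  ∀ T : Finset (Submodule ℝ V), ↑T ⊆ S → 2 ≤ T.card →
    (∀ U ∈ T, ∀ U' ∈ T, U ≠ U' → ¬ U ≤ U') → T.sup id ∉ G

/-- In the maximal building set `C_Φ` of a root system `Φ` (all subspaces spanned by
subsets of roots) every nested set is linearly ordered by inclusion; conversely, every
non-maximal building set `G` associated to `Φ` admits a nested set consisting of two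
incomparable subspaces. -/
theorem stmt9 {V : Type*} [AddCommGroup V] [Module ℝ V]
    (Φ : Finset V) (hΦ0 : (0 : V) ∉ Φ)
    (Cmax : Set (Submodule ℝ V))
    (hCmax : Cmax = {U | U ≠ ⊥ ∧ ∃ s ⊆ (↑Φ : Set V), U = span ℝ s})
    (G : Set (Submodule ℝ V)) (hGsub : G ⊆ Cmax)
    (hlines : ∀ α ∈ Φ, span ℝ ({α} : Set V) ∈ G)
    (hbuild : ∀ C ∈ Cmax,
      sSup {H | H ∈ G ∧ H ≤ C ∧ ∀ H' ∈ G, H ≤ H' → H' ≤ C → H = H'} = C ∧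
      sSupIndep {H | H ∈ G ∧ H ≤ C ∧ ∀ H' ∈ G, H ≤ H' → H' ≤ C → H = H'}) :
    (∀ S : Set (Submodule ℝ V), NestedSub Cmax S → IsChain (· ≤ ·) S) ∧
    (G ≠ Cmax → ∃ A ∈ G, ∃ B ∈ G, ¬ A ≤ B ∧ ¬ B ≤ A ∧ NestedSub G {A, B}) := by
  classical
  constructor
  · -- Part 1: nested sets for Cmax are chains
    intro S hS A hA B hB hne
    by_contra hcon
    push_neg at hcon
    obtain ⟨hAB, hBA⟩ := hcon
    -- apply nestedness to T = {A, B}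
    have hTsub : (↑({A, B} : Finset (Submodule ℝ V)) : Set (Submodule ℝ V)) ⊆ S := by
      intro x hx
      simp only [Finset.coe_insert, Finset.coe_singleton, Set.mem_insert_iff,
        Set.mem_singleton_iff] at hx
      rcases hx with rfl | rfl <;> assumption
    have hABne : A ≠ B := fun h => hAB (h ▸ le_refl A)
    have hcard : 2 ≤ ({A, B} : Finset (Submodule ℝ V)).card := by
      rw [Finset.card_insert_of_notMem (by simpa using hABne), Finset.card_singleton]
    have hpair : ∀ U ∈ ({A, B} : Finset (Submodule ℝ V)),
        ∀ U' ∈ ({A, B} : Finset (Submodule ℝ V)), U ≠ U' → ¬ U ≤ U' := by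
      intro U hU U' hU' hne'
      simp only [Finset.mem_insert, Finset.mem_singleton] at hU hU'
      rcases hU with rfl | rfl <;> rcases hU' with rfl | rfl
      · exact absurd rfl hne'
      · exact hAB
      · exact hBA
      · exact absurd rfl hne'
    have hnot := hS.2 {A, B} hTsub hcard hpair
    have hsup : ({A, B} : Finset (Submodule ℝ V)).sup id = A ⊔ B := by
      simp [Finset.sup_insert, Finset.sup_singleton]
    rw [hsup] at hnot
    -- but A ⊔ B ∈ Cmax
    have hA' := hS.1 hA
    have hB' := hS.1 hB
    rw [hCmax] at hA' hB'
    obtain ⟨hAbot, s, hsΦ, hAs⟩ := hA'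
    obtain ⟨hBbot, t, htΦ, hBt⟩ := hB'
    apply hnot
    rw [hCmax]
    refine ⟨?_, s ∪ t, Set.union_subset hsΦ htΦ, ?_⟩
    · intro h
      exact hAbot (le_bot_iff.mp (h ▸ le_sup_left (b := B)))
    · rw [hAs, hBt, span_union]
  · -- Part 2: G not maximal gives two incomparable nested elements
    intro hGne
    obtain ⟨C, hCmem, hCG⟩ : ∃ C, C ∈ Cmax ∧ C ∉ G := by
      by_contra h
      push_neg at h
      exact hGne (le_antisymm hGsub h)
    obtain ⟨hsup, _⟩ := hbuild C hCmem
    set F : Set (Submodule ℝ V) :=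
      {H | H ∈ G ∧ H ≤ C ∧ ∀ H' ∈ G, H ≤ H' → H' ≤ C → H = H'} with hF
    have hCbot : C ≠ ⊥ := (hCmax ▸ hCmem).1
    -- F has two distinct elements
    obtain ⟨A, hAF, B, hBF, hABne⟩ : ∃ A ∈ F, ∃ B ∈ F, A ≠ B := by
      by_contra h
      push_neg at h
      rcases Set.eq_empty_or_nonempty F with hFe | ⟨A, hAF⟩
      · rw [hFe, sSup_empty] at hsup
        exact hCbot hsup.symm
      · have : F = {A} := Set.eq_singleton_iff_unique_mem.mpr
          ⟨hAF, fun B hBF => (h A hAF B hBF).symm⟩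
        rw [this, sSup_singleton] at hsup
        exact hCG (hsup ▸ hAF.1)
    obtain ⟨hAG, hAC, hAmax⟩ := hAF
    obtain ⟨hBG, hBC, hBmax⟩ := hBF
    have hAB : ¬ A ≤ B := fun h => hABne (hAmax B hBG h hBC)
    have hBA : ¬ B ≤ A := fun h => hABne.symm (hBmax A hAG h hAC)
    refine ⟨A, hAG, B, hBG, hAB, hBA, ?_⟩
    constructor
    · intro x hx
      rcases hx with rfl | hx
      · exact hAG
      · exact Set.mem_singleton_iff.mp hx ▸ hBG
    · intro T hTsub hcard hpair hTG
      -- T must contain both A and B, so T.sup id = A ⊔ B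
      obtain ⟨x, hx, y, hy, hxy⟩ := Finset.one_lt_card.mp hcard
      have hxm := hTsub hx
      have hym := hTsub hy
      simp only [Set.mem_insert_iff, Set.mem_singleton_iff] at hxm hym
      have hboth : A ∈ T ∧ B ∈ T := by
        rcases hxm with rfl | rfl <;> rcases hym with rfl | rfl
        · exact absurd rfl hxy
        · exact ⟨hx, hy⟩
        · exact ⟨hy, hx⟩
        · exact absurd rfl hxy
      have hle : A ⊔ B ≤ T.sup id :=
        sup_le (Finset.le_sup (f := id) hboth.1) (Finset.le_sup (f := id) hboth.2)
      have hge : T.sup id ≤ A ⊔ B := by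
        apply Finset.sup_le
        intro U hU
        have := hTsub hU
        simp only [Set.mem_insert_iff, Set.mem_singleton_iff] at this
        rcases this with rfl | rfl
        · exact le_sup_left
        · exact le_sup_right
      have hsupAB : T.sup id = A ⊔ B := le_antisymm hge hle
      rw [hsupAB] at hTG
      -- A ⊔ B ∈ G with A ≤ A ⊔ B ≤ C contradicts maximality of A
      have hABC : A ⊔ B ≤ C := sup_le hAC hBC
      have := hAmax (A ⊔ B) hTG le_sup_left hABC
      exact hBA (this ▸ le_sup_right)
end

section
/- Let Φ be a root system with simple roots Δ and minimal building set F_Φ (irreducible subspaces). If B is spanned by a subset of Δ and its F_Φ-decomposition is B = A₁ ⊕ ... ⊕ A_k, then the subspaces A₁,...,A_k are pairwise orthogonal. -/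
/-!
Join two roots of `Φ ∩ B` when they are not orthogonal. The span of a connected component `C`
of this graph is irreducible: a root of `B` outside `C` is orthogonal to `C`, hence not in
`span C`, and an orthogonal splitting of `C` would disconnect it. An irreducible subspace of `B`
has connected roots, so it lies in the span of the component of any of its roots. Thus if a
root of `A i` is not orthogonal to a root of `A j`, both lie in the span of one component,
which equals `A i` by maximality, contradicting `A i ⊓ A j = ⊥`.
-/

open Finset Submodule

open scoped Classical

local notation "⟪" x ", " y "⟫" => @inner ℝ _ _ x y

/-- `U` is a `Φ`-irreducible subspace: it is spanned by the root subsystem `Φ ∩ U`,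
this subsystem is nonempty, and it admits no splitting into two nonempty mutually
orthogonal parts.  The minimal building set `F_Φ` consists of these subspaces. -/
def IrrSub {V : Type*} [NormedAddCommGroup V] [InnerProductSpace ℝ V]
    (Φ : Finset V) (U : Submodule ℝ V) : Prop :=
  (Φ.filter (fun α => α ∈ U)).Nonempty ∧
  U = span ℝ (↑(Φ.filter (fun α => α ∈ U)) : Set V) ∧
  ¬ ∃ S T : Finset V, S ∪ T = Φ.filter (fun α => α ∈ U) ∧ S ∩ T = ∅ ∧
      S.Nonempty ∧ T.Nonempty ∧ ∀ a ∈ S, ∀ b ∈ T, ⟪a, b⟫ = 0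

open Relation

section NonorthogonalityGraph

variable {V : Type*} [NormedAddCommGroup V] [InnerProductSpace ℝ V]

def HasOrthSplit (X : Finset V) : Prop :=
  ∃ S T : Finset V, S ∪ T = X ∧ S ∩ T = ∅ ∧ S.Nonempty ∧ T.Nonempty ∧
    ∀ a ∈ S, ∀ b ∈ T, ⟪a, b⟫ = 0

def NonorthAdj (X : Finset V) (u v : V) : Prop :=
  u ∈ X ∧ v ∈ X ∧ ⟪u, v⟫ ≠ 0

noncomputable def rootComponent (X : Finset V) (α : V) : Finset V :=
  X.filter (ReflTransGen (NonorthAdj X) α)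

variable {X Y : Finset V}

instance NonorthAdj.instSymm : Std.Symm (NonorthAdj X) where
  symm _ _ h := ⟨h.2.1, h.1, by rw [real_inner_comm]; exact h.2.2⟩

lemma NonorthAdj.mono (hXY : X ⊆ Y) {u v : V} (h : NonorthAdj X u v) : NonorthAdj Y u v :=
  ⟨hXY h.1, hXY h.2.1, h.2.2⟩

lemma mem_of_reflTransGen_nonorthAdj {a b : V} (ha : a ∈ X)
    (h : ReflTransGen (NonorthAdj X) a b) : b ∈ X := by
  rcases h.cases_tail with rfl | ⟨c, -, hcb⟩
  exacts [ha, hcb.2.1]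

lemma reflTransGen_nonorthAdj_of_not_hasOrthSplit (hX : ¬ HasOrthSplit X) {a b : V}
    (ha : a ∈ X) (hb : b ∈ X) : ReflTransGen (NonorthAdj X) a b := by
  by_contra hab
  refine hX ⟨X.filter (ReflTransGen (NonorthAdj X) a),
    X.filter (fun x => ¬ ReflTransGen (NonorthAdj X) a x), filter_union_filter_not_eq _ X,
    disjoint_iff_inter_eq_empty.1 (disjoint_filter_filter_not _ _ _),
    ⟨a, mem_filter.2 ⟨ha, .refl⟩⟩, ⟨b, mem_filter.2 ⟨hb, hab⟩⟩, ?_⟩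
  intro s hs t ht
  rw [mem_filter] at hs ht
  by_contra hst
  exact ht.2 (hs.2.tail ⟨hs.1, ht.1, hst⟩)

lemma mem_left_of_reflTransGen_nonorthAdj {S T : Finset V}
    (horth : ∀ a ∈ S, ∀ b ∈ T, ⟪a, b⟫ = 0) {s t : V} (hs : s ∈ S)
    (hcover : ∀ x, ReflTransGen (NonorthAdj X) s x → x ∈ S ∪ T)
    (hst : ReflTransGen (NonorthAdj X) s t) : t ∈ S := by
  induction hst with
  | refl => exact hs
  | tail hsu huv ih =>
    rcases mem_union.1 (hcover _ (hsu.tail huv)) with hv | hv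
    · exact hv
    · exact absurd (horth _ ih _ hv) huv.2.2

lemma not_hasOrthSplit_rootComponent (X : Finset V) (α : V) :
    ¬ HasOrthSplit (rootComponent X α) := by
  rintro ⟨S, T, hST, hdisj, ⟨s, hs⟩, ⟨t, ht⟩, horth⟩
  have hmem : ∀ x, x ∈ S ∪ T ↔ x ∈ X ∧ ReflTransGen (NonorthAdj X) α x := fun x => by
    rw [hST, rootComponent, mem_filter]
  obtain ⟨hsX, has⟩ := (hmem s).1 (mem_union_left T hs)
  obtain ⟨-, hat⟩ := (hmem t).1 (mem_union_right S ht)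
  have htS : t ∈ S := mem_left_of_reflTransGen_nonorthAdj horth hs
    (fun x hx => (hmem x).2 ⟨mem_of_reflTransGen_nonorthAdj hsX hx, has.trans hx⟩)
    ((Std.Symm.symm _ _ has).trans hat)
  simpa [hdisj] using mem_inter.2 ⟨htS, ht⟩

lemma filter_mem_span_rootComponent (h0 : (0 : V) ∉ X) (α : V) :
    X.filter (· ∈ span ℝ (rootComponent X α : Set V)) = rootComponent X α := by
  ext γ
  refine ⟨fun hγ => ?_, fun hγ => mem_filter.2 ⟨filter_subset _ _ hγ, subset_span hγ⟩⟩
  obtain ⟨hγX, hγC⟩ := mem_filter.1 hγ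
  by_contra hγ
  have horth : span ℝ (rootComponent X α : Set V) ⟂ span ℝ {γ} := by
    rw [isOrtho_span]
    rintro c hc _ rfl
    by_contra hcγ
    obtain ⟨hcX, hαc⟩ := mem_filter.1 hc
    exact hγ (mem_filter.2 ⟨hγX, hαc.tail ⟨hcX, hγX, hcγ⟩⟩)
  have : γ = 0 := inner_self_eq_zero.1 (horth.inner_eq hγC (mem_span_singleton_self γ))
  exact h0 (this ▸ hγX)

end NonorthogonalityGraph

section IrreducibleSubspaces

variable {V : Type*} [NormedAddCommGroup V] [InnerProductSpace ℝ V] {Φ : Finset V}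
  {B U : Submodule ℝ V}

lemma span_rootComponent_le (α : V) :
    span ℝ (rootComponent (Φ.filter (· ∈ B)) α : Set V) ≤ B :=
  span_le.2 fun _ hx => (mem_filter.1 (filter_subset _ _ hx)).2

lemma irrSub_span_rootComponent (h0 : (0 : V) ∉ Φ) {α : V} (hα : α ∈ Φ.filter (· ∈ B)) :
    IrrSub Φ (span ℝ (rootComponent (Φ.filter (· ∈ B)) α : Set V)) := by
  set C := rootComponent (Φ.filter (· ∈ B)) α
  have hroots : Φ.filter (· ∈ span ℝ (C : Set V)) = C := calc
    _ = (Φ.filter (· ∈ B)).filter (· ∈ span ℝ (C : Set V)) := by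
      rw [filter_filter]
      exact filter_congr fun x _ => (and_iff_right_of_imp fun hx => span_rootComponent_le α hx).symm
    _ = C := filter_mem_span_rootComponent (fun h => h0 (filter_subset _ _ h)) α
  refine ⟨⟨α, ?_⟩, ?_, ?_⟩ <;> rw [hroots]
  · exact mem_filter.2 ⟨hα, .refl⟩
  · exact not_hasOrthSplit_rootComponent _ α

lemma le_span_rootComponent (hU : IrrSub Φ U) (hUB : U ≤ B) {α γ : V}
    (hγ : γ ∈ Φ.filter (· ∈ U)) (hαγ : ReflTransGen (NonorthAdj (Φ.filter (· ∈ B))) α γ) :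
    U ≤ span ℝ (rootComponent (Φ.filter (· ∈ B)) α : Set V) := by
  have hsub : Φ.filter (· ∈ U) ⊆ Φ.filter (· ∈ B) := monotone_filter_right Φ fun _ _ hx => hUB hx
  refine hU.2.1.trans_le (span_mono fun x hx => mem_filter.2 ⟨hsub hx, hαγ.trans ?_⟩)
  exact ReflTransGen.mono (fun _ _ h => NonorthAdj.mono hsub h) _ _
    (reflTransGen_nonorthAdj_of_not_hasOrthSplit hU.2.2 hγ hx)

lemma isOrtho_of_maximal_irrSub (h0 : (0 : V) ∉ Φ) {A₁ A₂ : Submodule ℝ V}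
    (h₁ : IrrSub Φ A₁) (h₁B : A₁ ≤ B)
    (h₁max : ∀ U : Submodule ℝ V, IrrSub Φ U → U ≤ B → A₁ ≤ U → A₁ = U)
    (h₂ : IrrSub Φ A₂) (h₂B : A₂ ≤ B) (hdisj : Disjoint A₁ A₂) : A₁ ⟂ A₂ := by
  rw [h₁.2.1, h₂.2.1, isOrtho_span]
  intro α hα β hβ
  by_contra hαβ
  have hαB : α ∈ Φ.filter (· ∈ B) := monotone_filter_right Φ (fun _ _ hx => h₁B hx) hα
  have hβB : β ∈ Φ.filter (· ∈ B) := monotone_filter_right Φ (fun _ _ hx => h₂B hx) hβ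
  have hA₁ : A₁ = span ℝ (rootComponent (Φ.filter (· ∈ B)) α : Set V) :=
    h₁max _ (irrSub_span_rootComponent h0 hαB) (span_rootComponent_le α)
      (le_span_rootComponent h₁ h₁B hα .refl)
  have hA₂ : A₂ ≤ A₁ :=
    hA₁ ▸ le_span_rootComponent h₂ h₂B hβ (.single ⟨hαB, hβB, hαβ⟩)
  have hβ0 : β = 0 := (mem_bot ℝ).1 (disjoint_self.1 (hdisj.mono_left hA₂) ▸ (mem_filter.1 hβ).2)
  exact hαβ (by rw [hβ0, inner_zero_right])

end IrreducibleSubspaces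

theorem stmt10_general {V : Type*} [NormedAddCommGroup V] [InnerProductSpace ℝ V]
    (Φ : Finset V)
    (h0 : (0 : V) ∉ Φ)
    (B : Submodule ℝ V)
    (k : ℕ) (A : Fin k → Submodule ℝ V)
    (hAirr : ∀ i, IrrSub Φ (A i))
    (hAle : ∀ i, A i ≤ B)
    (hAmax : ∀ i, ∀ U : Submodule ℝ V, IrrSub Φ U → U ≤ B → A i ≤ U → A i = U)
    (hAindep : iSupIndep A) :
    ∀ i j, i ≠ j → ∀ x ∈ A i, ∀ y ∈ A j, ⟪x, y⟫ = 0 := by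
  intro i j hij x hx y hy
  exact (isOrtho_of_maximal_irrSub h0 (hAirr i) (hAle i) (hAmax i) (hAirr j) (hAle j)
    (hAindep.pairwiseDisjoint hij)).inner_eq hx hy

/-- Let `Φ` be a root system with simple system `Δ` and minimal building set `F_Φ`
(the `Φ`-irreducible subspaces).  If `B` is spanned by a subset `I` of `Δ` and
`B = A 1 ⊕ ... ⊕ A k` is its `F_Φ`-decomposition (the `A i` are the maximal elements
of `F_Φ` contained in `B`, they are independent and their sum is `B`), then the
subspaces `A 1, ..., A k` are pairwise orthogonal. -/
theorem stmt10 {V : Type*} [NormedAddCommGroup V] [InnerProductSpace ℝ V]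
    [FiniteDimensional ℝ V]
    (Φ pos Δ : Finset V)
    (hspan : Submodule.span ℝ (↑Φ : Set V) = ⊤)
    (h0 : (0 : V) ∉ Φ)
    (hneg : ∀ α ∈ Φ, -α ∈ Φ)
    (hrefl : ∀ α ∈ Φ, ∀ β ∈ Φ, β - (2 * ⟪β, α⟫ / ⟪α, α⟫) • α ∈ Φ)
    (hpos : pos ⊆ Φ)
    (hposneg : ∀ α ∈ Φ, (α ∈ pos ∧ -α ∉ pos) ∨ (α ∉ pos ∧ -α ∈ pos))
    (hΔpos : Δ ⊆ pos)
    (hΔindep : LinearIndependent ℝ ((↑) : (↑Δ : Set V) → V))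
    (hΔcomb : ∀ β ∈ pos, ∃ c : V → ℝ, (∀ α ∈ Δ, 0 ≤ c α) ∧ β = ∑ α ∈ Δ, c α • α)
    (I : Finset V) (hI : I ⊆ Δ)
    (B : Submodule ℝ V) (hB : B = span ℝ (↑I : Set V))
    (k : ℕ) (A : Fin k → Submodule ℝ V)
    (hAirr : ∀ i, IrrSub Φ (A i))
    (hAle : ∀ i, A i ≤ B)
    (hAmax : ∀ i, ∀ U : Submodule ℝ V, IrrSub Φ U → U ≤ B → A i ≤ U → A i = U)
    (hAindep : iSupIndep A)
    (hAsum : B = ⨆ i, A i) :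
    ∀ i j, i ≠ j → ∀ x ∈ A i, ∀ y ∈ A j, ⟪x, y⟫ = 0 :=
  stmt10_general Φ h0 B k A hAirr hAle hAmax hAindep
end
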